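/- For every integer n ≥ 1 and every pattern pair p ∈ {(011,021), (010,021)}, the number of inversion sequences of length n avoiding both patterns of p equals the n-th Catalan number C_n = binom(2n,n)/(n+1), i.e. |I_n(p)| = C_n. -/

import Mathlib

/-- An inversion sequence of length `n` (0-indexed): `e i ≤ i` for all `i`. -/
def InvSeq {n : ℕ} (e : Fin n → ℕ) : Prop := ∀ i : Fin n, e i ≤ (i : ℕ)

/-- `e` contains the pattern `p` (a word of nonnegative integers): there is a
strictly increasing choice of positions on which `e` is order-isomorphic to `p`. -/
def Contains {n : ℕ} (e : Fin n → ℕ) (p : List ℕ) : Prop :=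
  ∃ s : Fin p.length → Fin n, StrictMono s ∧
    ∀ a b : Fin p.length,
      (p.get a < p.get b ↔ e (s a) < e (s b)) ∧
      (p.get a = p.get b ↔ e (s a) = e (s b))

/-- `e` avoids the pattern `p`. -/
def Avoids {n : ℕ} (e : Fin n → ℕ) (p : List ℕ) : Prop := ¬ Contains e p

/-- The number of zero entries of `e`. -/
def zeroStat {n : ℕ} (e : Fin n → ℕ) : ℕ :=
  (Finset.univ.filter (fun i : Fin n => e i = 0)).card

/-- The number of distinct positive values among the entries of `e`. -/
def distStat {n : ℕ} (e : Fin n → ℕ) : ℕ :=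
  ((Finset.univ.image e).filter (fun v => 0 < v)).card

/-- The number of repeated entries of `e`: `n - dist e`. -/
def repStat {n : ℕ} (e : Fin n → ℕ) : ℕ := n - distStat e

/-- The number of saturated entries of `e` (1-indexed: `e_i = i - 1`). -/
def satuStat {n : ℕ} (e : Fin n → ℕ) : ℕ :=
  (Finset.univ.filter (fun i : Fin n => e i = (i : ℕ))).card


/-!
An inversion sequence starts with `0`. So if `b < c` and `e c < e b`, positions `0, b, c` form an
occurrence of `010` (when `e c = 0`) or of `021` (when `e c > 0`), and if `e c = e b ≠ 0` they
form an occurrence of `011`. Hence avoiding `{010, 021}` means being weakly increasing, and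
avoiding `{011, 021}` means that every nonzero entry is a strict left-to-right maximum. Taking
prefix maxima maps the latter bijectively onto the former; the inverse replaces repeated values
by `0`. Weakly increasing inversion sequences satisfy the Catalan recurrence: split at the last
index `k` with `e k = k`; the part before `k` and the part after it, shifted down by `k`, are
arbitrary weakly increasing inversion sequences of lengths `k` and `n - k`.
-/

open Finset

section Patterns

variable {n : ℕ} {e : Fin n → ℕ}

theorem contains_three_iff (x y z : ℕ) :
    Contains e [x, y, z] ↔ ∃ a b c : Fin n, a < b ∧ b < c ∧
      ((x < y ↔ e a < e b) ∧ (x = y ↔ e a = e b)) ∧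
      ((y < z ↔ e b < e c) ∧ (y = z ↔ e b = e c)) ∧
      ((x < z ↔ e a < e c) ∧ (x = z ↔ e a = e c)) := by
  constructor
  · rintro ⟨s, hs, hord⟩
    exact ⟨s 0, s 1, s 2, hs Fin.zero_lt_one, hs Fin.one_lt_last, hord 0 1, hord 1 2, hord 0 2⟩
  · rintro ⟨a, b, c, hab, hbc, h01, h12, h02⟩
    refine ⟨![a, b, c], Fin.strictMono_iff_lt_succ.2 fun i => by fin_cases i <;> assumption, ?_⟩
    intro u v
    fin_cases u <;> fin_cases v <;> simp <;> omega

theorem contains_011_iff :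
    Contains e [0, 1, 1] ↔ ∃ a b c : Fin n, a < b ∧ b < c ∧ e a < e b ∧ e b = e c := by
  rw [contains_three_iff]
  exact exists₃_congr fun a b c => and_congr_right fun _ => and_congr_right fun _ => by omega

theorem contains_010_iff :
    Contains e [0, 1, 0] ↔ ∃ a b c : Fin n, a < b ∧ b < c ∧ e a < e b ∧ e a = e c := by
  rw [contains_three_iff]
  exact exists₃_congr fun a b c => and_congr_right fun _ => and_congr_right fun _ => by omega

theorem contains_021_iff :
    Contains e [0, 2, 1] ↔ ∃ a b c : Fin n, a < b ∧ b < c ∧ e a < e c ∧ e c < e b := by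
  rw [contains_three_iff]
  exact exists₃_congr fun a b c => and_congr_right fun _ => and_congr_right fun _ => by omega

theorem InvSeq.exists_lt_eq_zero (he : InvSeq e) {b : Fin n} (hb : 0 < e b) :
    ∃ a < b, e a = 0 :=
  ⟨⟨0, b.pos⟩, Fin.lt_def.2 (show 0 < (b : ℕ) by have := he b; omega),
    Nat.le_zero.1 (he _)⟩

def ZeroOrRecord (e : Fin n → ℕ) : Prop := ∀ b c : Fin n, b < c → e c = 0 ∨ e b < e c

theorem avoids_011_021_iff (he : InvSeq e) :
    Avoids e [0, 1, 1] ∧ Avoids e [0, 2, 1] ↔ ZeroOrRecord e := by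
  simp only [Avoids, contains_011_iff, contains_021_iff, ← not_or]
  constructor
  · intro h b c hbc
    by_contra! hcb
    obtain ⟨a, hab, ha⟩ := he.exists_lt_eq_zero (b := b) (by omega)
    obtain hlt | heq := hcb.2.lt_or_eq
    · exact h (.inr ⟨a, b, c, hab, hbc, by omega, hlt⟩)
    · exact h (.inl ⟨a, b, c, hab, hbc, by omega, heq.symm⟩)
  · rintro h (⟨a, b, c, -, hbc, h₁, h₂⟩ | ⟨a, b, c, -, hbc, h₁, h₂⟩) <;>
      rcases h b c hbc with h₃ | h₃ <;> omega

theorem avoids_010_021_iff (he : InvSeq e) :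
    Avoids e [0, 1, 0] ∧ Avoids e [0, 2, 1] ↔ Monotone e := by
  simp only [Avoids, contains_010_iff, contains_021_iff, ← not_or]
  constructor
  · intro h b c hbc
    by_contra! hcb
    have hbc : b < c := hbc.lt_of_ne (by rintro rfl; omega)
    obtain ⟨a, hab, ha⟩ := he.exists_lt_eq_zero (b := b) (by omega)
    obtain hc | hc := Nat.eq_zero_or_pos (e c)
    · exact h (.inl ⟨a, b, c, hab, hbc, by omega, by omega⟩)
    · exact h (.inr ⟨a, b, c, hab, hbc, by omega, hcb⟩)
  · rintro h (⟨a, b, c, -, hbc, h₁, h₂⟩ | ⟨a, b, c, -, hbc, h₁, h₂⟩) <;>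
      have := h hbc.le <;> omega

end Patterns

section PrefixMax

variable {n : ℕ}

def prefixMax (e : Fin n → ℕ) (i : Fin n) : ℕ := (Iic i).sup e

def eraseRepeats (m : Fin n → ℕ) (i : Fin n) : ℕ := if ∃ j < i, m j = m i then 0 else m i

theorem le_prefixMax (e : Fin n → ℕ) {i j : Fin n} (h : j ≤ i) : e j ≤ prefixMax e i :=
  le_sup (mem_Iic.2 h)

theorem prefixMax_le {e : Fin n → ℕ} {i : Fin n} {m : ℕ} (h : ∀ j ≤ i, e j ≤ m) :
    prefixMax e i ≤ m :=
  Finset.sup_le fun j hj => h j (mem_Iic.1 hj)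

theorem prefixMax_monotone (e : Fin n → ℕ) : Monotone (prefixMax e) :=
  fun _ _ hij => sup_mono (Iic_subset_Iic.2 hij)

theorem InvSeq.prefixMax {e : Fin n → ℕ} (he : InvSeq e) : InvSeq (prefixMax e) :=
  fun _ => prefixMax_le fun j hj => (he j).trans hj

theorem eraseRepeats_le (m : Fin n → ℕ) (i : Fin n) : eraseRepeats m i ≤ m i := by
  unfold eraseRepeats; split_ifs <;> omega

theorem zeroOrRecord_eraseRepeats {m : Fin n → ℕ} (hm : Monotone m) :
    ZeroOrRecord (eraseRepeats m) := by
  intro b c hbc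
  by_cases hc : ∃ j < c, m j = m c
  · exact .inl (if_pos hc)
  · refine .inr <| (eraseRepeats_le m b).trans_lt ?_
    rw [eraseRepeats, if_neg hc]
    exact (hm hbc.le).lt_of_ne fun h => hc ⟨b, hbc, h⟩

theorem eraseRepeats_prefixMax {e : Fin n → ℕ} (he : ZeroOrRecord e) :
    eraseRepeats (prefixMax e) = e := by
  funext i
  by_cases hi : e i = 0
  · obtain ⟨j, hji, hj⟩ := exists_mem_eq_sup (Iic i) nonempty_Iic e
    change prefixMax e i = e j at hj
    rw [hi]
    rcases (mem_Iic.1 hji).lt_or_eq with hji | rfl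
    · have : prefixMax e j = prefixMax e i :=
        le_antisymm (prefixMax_monotone e hji.le) (hj ▸ le_prefixMax e le_rfl)
      exact if_pos ⟨j, hji, this⟩
    · exact Nat.le_zero.1 (hi ▸ hj ▸ eraseRepeats_le _ _)
  · have hrec : ∀ j < i, e j < e i := fun j hj => (he j i hj).resolve_left hi
    have hmax : prefixMax e i = e i :=
      (prefixMax_le fun j hj => hj.lt_or_eq.elim (hrec j · |>.le) (· ▸ le_rfl)).antisymm
        (le_prefixMax e le_rfl)
    have hbelow : ∀ j < i, prefixMax e j < e i := fun j hji =>
      (Finset.sup_lt_iff (Nat.pos_of_ne_zero hi)).2 fun k hk =>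
        hrec k ((mem_Iic.1 hk).trans_lt hji)
    rw [eraseRepeats, if_neg fun ⟨j, hji, hj⟩ => (hbelow j hji).ne (hj.trans hmax), hmax]

theorem prefixMax_eraseRepeats {m : Fin n → ℕ} (hm : Monotone m) :
    prefixMax (eraseRepeats m) = m := by
  funext i
  refine (prefixMax_le fun j hj => (eraseRepeats_le m j).trans (hm hj)).antisymm ?_
  induction i using WellFoundedLT.induction with
  | _ i ih =>
    by_cases hrep : ∃ j < i, m j = m i
    · obtain ⟨j, hji, hj⟩ := hrep
      exact hj ▸ (ih j hji).trans (prefixMax_monotone _ hji.le)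
    · have : eraseRepeats m i = m i := if_neg hrep
      exact this ▸ le_prefixMax _ le_rfl

end PrefixMax

abbrev MonoInvSeq (n : ℕ) := {e : Fin n → ℕ // InvSeq e ∧ Monotone e}

instance (n : ℕ) : Finite (MonoInvSeq n) :=
  Finite.of_injective (fun e i => (⟨e.1 i, (e.2.1 i).trans_lt i.isLt⟩ : Fin n))
    fun _ _ h => Subtype.ext <| funext fun i => congrArg Fin.val (congrFun h i)

def zeroOrRecordEquiv (n : ℕ) :
    {e : Fin n → ℕ // InvSeq e ∧ ZeroOrRecord e} ≃ MonoInvSeq n where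
  toFun e := ⟨prefixMax e.1, e.2.1.prefixMax, prefixMax_monotone e.1⟩
  invFun m := ⟨eraseRepeats m.1, fun i => (eraseRepeats_le m.1 i).trans (m.2.1 i),
    zeroOrRecord_eraseRepeats m.2.2⟩
  left_inv e := Subtype.ext (eraseRepeats_prefixMax e.2.2)
  right_inv m := Subtype.ext (prefixMax_eraseRepeats m.2.2)

section LastSaturated

variable {n : ℕ} {e : Fin (n + 1) → ℕ} {k : Fin (n + 1)}

noncomputable def lastSat (e : Fin (n + 1) → ℕ) : Fin (n + 1) :=
  ({i | e i = i} : Finset _).sup id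

theorem le_lastSat {i : Fin (n + 1)} (h : e i = i) : i ≤ lastSat e :=
  le_sup (f := id) (by simpa using h)

theorem InvSeq.apply_lastSat (he : InvSeq e) : e (lastSat e) = lastSat e := by
  obtain ⟨j, hj, hsup⟩ := exists_mem_eq_sup ({i | e i = i} : Finset _)
    ⟨0, by simpa using Nat.le_zero.1 (he 0)⟩ id
  rw [lastSat, hsup]
  simpa using hj

theorem InvSeq.lastSat_eq_iff (he : InvSeq e) :
    lastSat e = k ↔ e k = k ∧ ∀ i, k < i → e i < i := by
  constructor
  · rintro rfl
    exact ⟨he.apply_lastSat, fun i hi =>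
      (he i).lt_of_ne fun h => (le_lastSat h).not_gt hi⟩
  · rintro ⟨hk, hlt⟩
    refine le_antisymm (Finset.sup_le fun i hi => ?_) (le_lastSat hk)
    by_contra! hki
    exact (hlt i hki).ne (by simpa using hi)

end LastSaturated

section Glue

variable {n : ℕ} (k : Fin (n + 1))

def glue (f : Fin k → ℕ) (g : Fin (n - k) → ℕ) (i : Fin (n + 1)) : ℕ :=
  if h : (i : ℕ) < k then f ⟨i, h⟩
  else if h' : (i : ℕ) = k then k
  else g ⟨i - (k + 1), by have := i.isLt; omega⟩ + k

def headSeq (e : Fin (n + 1) → ℕ) (i : Fin k) : ℕ := e ⟨i, i.isLt.trans k.isLt⟩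

def tailSeq (e : Fin (n + 1) → ℕ) (j : Fin (n - k)) : ℕ :=
  e ⟨k + 1 + j, by have := j.isLt; omega⟩ - k

variable {k} {f : Fin k → ℕ} {g : Fin (n - k) → ℕ}

theorem glue_of_lt {i : Fin (n + 1)} (h : (i : ℕ) < k) : glue k f g i = f ⟨i, h⟩ := dif_pos h

theorem glue_of_eq {i : Fin (n + 1)} (h : (i : ℕ) = k) : glue k f g i = k := by
  rw [glue, dif_neg h.not_lt, dif_pos h]

theorem glue_of_gt {i : Fin (n + 1)} (h : (k : ℕ) < i) :
    glue k f g i = g ⟨i - (k + 1), by have := i.isLt; omega⟩ + k := by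
  rw [glue, dif_neg (by omega), dif_neg (by omega)]

theorem invSeq_glue (hf : InvSeq f) (hg : InvSeq g) : InvSeq (glue k f g) := by
  intro i
  rcases lt_trichotomy (i : ℕ) k with h | h | h
  · simpa [glue_of_lt h] using hf ⟨i, h⟩
  · rw [glue_of_eq h, h]
  · have := hg ⟨i - (k + 1), by have := i.isLt; omega⟩
    rw [glue_of_gt h]
    simp only at this
    omega

theorem monotone_glue (hfI : InvSeq f) (hf : Monotone f) (hg : Monotone g) :
    Monotone (glue k f g) := by
  intro i j hij
  rw [Fin.le_def] at hij
  have hfk (i : Fin k) : f i < k := (hfI i).trans_lt i.isLt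
  simp only [glue]
  split_ifs
  all_goals first
    | exact hf (Fin.mk_le_mk.2 hij)
    | exact Nat.add_le_add_right (hg (Fin.mk_le_mk.2 (by omega))) _
    | (have := hfk ⟨i, ‹_›⟩; omega)
    | omega

theorem headSeq_glue : headSeq k (glue k f g) = f :=
  funext fun i => glue_of_lt i.isLt

theorem tailSeq_glue : tailSeq k (glue k f g) = g := by
  funext j
  rw [tailSeq, glue_of_gt (by simp only; omega), Nat.add_sub_cancel]
  congr 2
  simp only
  omega

theorem lastSat_glue (hf : InvSeq f) (hg : InvSeq g) :
    lastSat (glue k f g) = k := by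
  refine (invSeq_glue hf hg).lastSat_eq_iff.2 ⟨glue_of_eq rfl, fun i hi => ?_⟩
  have := hg ⟨i - (k + 1), by have := i.isLt; omega⟩
  rw [glue_of_gt hi]
  simp only at this
  omega

variable {e : Fin (n + 1) → ℕ}

theorem glue_headSeq_tailSeq (hk : e k = k) (he : Monotone e) :
    glue k (headSeq k e) (tailSeq k e) = e := by
  funext i
  rcases lt_trichotomy (i : ℕ) k with h | h | h
  · exact glue_of_lt h
  · rw [glue_of_eq h, Fin.ext h, hk]
  · have hki : (k : ℕ) ≤ e i := hk ▸ he h.le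
    rw [glue_of_gt h, tailSeq]
    have : e ⟨k + 1 + (i - (k + 1)), by omega⟩ = e i :=
      congrArg e (Fin.ext (by simp only; omega))
    rw [this]
    omega

theorem invSeq_headSeq (he : InvSeq e) : InvSeq (headSeq k e) := fun _ => he _

theorem monotone_headSeq (he : Monotone e) : Monotone (headSeq k e) := fun _ _ h => he h

theorem invSeq_tailSeq (hlt : ∀ i, k < i → e i < i) : InvSeq (tailSeq k e) := by
  intro j
  have := hlt ⟨k + 1 + j, by omega⟩ (Fin.lt_def.2 (by simp only; omega))
  simp only [tailSeq] at this ⊢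
  omega

theorem monotone_tailSeq (he : Monotone e) : Monotone (tailSeq k e) :=
  fun _ _ h => Nat.sub_le_sub_right (he (Fin.mk_le_mk.2 (by rw [Fin.le_def] at h; omega))) _

end Glue

noncomputable def lastSatFiberEquiv (n : ℕ) (k : Fin (n + 1)) :
    {e : MonoInvSeq (n + 1) // lastSat e.1 = k} ≃ MonoInvSeq k × MonoInvSeq (n - k) where
  toFun e :=
    (⟨headSeq k e.1.1, invSeq_headSeq e.1.2.1, monotone_headSeq e.1.2.2⟩,
      ⟨tailSeq k e.1.1, invSeq_tailSeq (e.1.2.1.lastSat_eq_iff.1 e.2).2,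
        monotone_tailSeq e.1.2.2⟩)
  invFun fg :=
    ⟨⟨glue k fg.1.1 fg.2.1, invSeq_glue fg.1.2.1 fg.2.2.1,
      monotone_glue fg.1.2.1 fg.1.2.2 fg.2.2.2⟩, lastSat_glue fg.1.2.1 fg.2.2.1⟩
  left_inv e := Subtype.ext <| Subtype.ext <|
    glue_headSeq_tailSeq (e.1.2.1.lastSat_eq_iff.1 e.2).1 e.1.2.2
  right_inv _ := Prod.ext (Subtype.ext headSeq_glue) (Subtype.ext tailSeq_glue)

theorem card_monoInvSeq_succ (n : ℕ) :
    Nat.card (MonoInvSeq (n + 1)) =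
      ∑ k : Fin (n + 1), Nat.card (MonoInvSeq k) * Nat.card (MonoInvSeq (n - k)) := by
  rw [← Nat.card_congr (Equiv.sigmaFiberEquiv fun e : MonoInvSeq (n + 1) => lastSat e.1),
    Nat.card_sigma]
  exact sum_congr rfl fun k _ => by rw [Nat.card_congr (lastSatFiberEquiv n k), Nat.card_prod]

theorem card_monoInvSeq (n : ℕ) : Nat.card (MonoInvSeq n) = catalan n := by
  induction n using Nat.strong_induction_on with
  | _ n ih =>
    cases n with
    | zero =>
      rw [catalan_zero]
      exact Nat.card_eq_one_iff_exists.2 ⟨⟨finZeroElim, finZeroElim, fun i => i.elim0⟩,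
        fun _ => Subtype.ext (funext finZeroElim)⟩
    | succ n =>
      rw [card_monoInvSeq_succ, catalan_succ]
      exact sum_congr rfl fun k _ => by rw [ih k (by omega), ih (n - k) (by omega)]

theorem stmt_7_general (n : ℕ) (p q : List ℕ)
    (hpq : (p, q) = ([0,1,1], [0,2,1]) ∨ (p, q) = ([0,1,0], [0,2,1])) :
    Nat.card {e : Fin n → ℕ // InvSeq e ∧ Avoids e p ∧ Avoids e q}
      = catalan n := by
  rw [← card_monoInvSeq n]
  rcases hpq with h | h <;> obtain ⟨rfl, rfl⟩ := Prod.mk.inj h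
  · rw [← Nat.card_congr (zeroOrRecordEquiv n)]
    exact Nat.card_congr <| .subtypeEquivRight fun _ => and_congr_right avoids_011_021_iff
  · exact Nat.card_congr <| .subtypeEquivRight fun _ => and_congr_right avoids_010_021_iff

theorem stmt_7 (n : ℕ) (hn : 1 ≤ n) (p q : List ℕ)
    (hpq : (p, q) = ([0,1,1], [0,2,1]) ∨ (p, q) = ([0,1,0], [0,2,1])) :
    Nat.card {e : Fin n → ℕ // InvSeq e ∧ Avoids e p ∧ Avoids e q}
      = catalan n :=
  stmt_7_general n p q hpq
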